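/- arXiv:2507.04718 — 3 statements merged into one kernel-verified Lean document; each statement's English description precedes it below -/
import Mathlib

section
/- Under the same hypotheses on β and h, define W*(t,x) = Σ_{i=1}^n β(t)·x_i²/(1 + h(x_i)). If x(t) is a solution of the system ẋ_i = β(t)x_i/(1+h(x_i)) with initial condition x(t0) = x₀, then ∫_{t0}^∞ max{W*(τ, x(τ)), 0} dτ ≤ M₁·‖x₀‖²·exp(2M₁). -/
open MeasureTheory Real Set

theorem integral_Wstar_le
    (n : ℕ) (β h : ℝ → ℝ) (x : ℝ → EuclideanSpace ℝ (Fin n)) (t0 M₁ : ℝ)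
    (x₀ : EuclideanSpace ℝ (Fin n))
    (hβc : Continuous β) (hβpos : ∀ t, 0 < β t)
    (hβint : IntegrableOn β (Ici t0))
    (hM : ∫ τ in Ici t0, β τ = M₁)
    (hhc : Continuous h) (hh : ∀ y, 0 ≤ h y)
    (hode : ∀ i : Fin n, ∀ t ≥ t0,
      HasDerivAt (fun s => x s i) (β t * x t i / (1 + h (x t i))) t)
    (hx0 : x t0 = x₀) :
    (∫ τ in Ici t0, max (∑ i : Fin n, β τ * (x τ i) ^ 2 / (1 + h (x τ i))) 0)
      ≤ M₁ * ‖x₀‖ ^ 2 * Real.exp (2 * M₁) := by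
  have hden : ∀ y : ℝ, (1:ℝ) ≤ 1 + h y := fun y => by linarith [hh y]
  have hβnn : ∀ t, 0 ≤ β t := fun t => (hβpos t).le
  set S : ℝ → ℝ := fun t => ∑ i : Fin n, (x t i) ^ 2 with hSdef
  set B : ℝ → ℝ := fun t => ∫ s in t0..t, β s with hBdef
  have hSnn : ∀ t, 0 ≤ S t := fun t => Finset.sum_nonneg fun i _ => sq_nonneg _
  have hBderiv : ∀ t : ℝ, HasDerivAt B (β t) t := by
    intro t
    exact intervalIntegral.integral_hasDerivAt_right (hβc.intervalIntegrable _ _)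
      (hβc.stronglyMeasurable.stronglyMeasurableAtFilter) hβc.continuousAt
  have hBle : ∀ t ≥ t0, B t ≤ M₁ := by
    intro t ht
    have h1 : B t = ∫ s in Ioc t0 t, β s := intervalIntegral.integral_of_le ht
    rw [h1, ← hM]
    refine setIntegral_mono_set hβint ?_ ?_
    · filter_upwards with s using hβnn s
    · filter_upwards with s hs using le_of_lt hs.1
  have hB0 : B t0 = 0 := intervalIntegral.integral_same
  have hSderiv : ∀ t ≥ t0,
      HasDerivAt S (∑ i : Fin n, 2 * x t i * (β t * x t i / (1 + h (x t i)))) t := by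
    intro t ht
    refine HasDerivAt.fun_sum fun i _ => ?_
    have := (hode i t ht).fun_pow 2
    simpa [mul_comm, mul_assoc, mul_left_comm] using this
  set u : ℝ → ℝ := fun t => S t * Real.exp (-2 * B t) with hudef
  have huderiv : ∀ t ≥ t0, HasDerivAt u
      ((∑ i : Fin n, 2 * x t i * (β t * x t i / (1 + h (x t i)))) * Real.exp (-2 * B t)
        + S t * (Real.exp (-2 * B t) * (-2 * β t))) t := by
    intro t ht
    exact (hSderiv t ht).mul (((hBderiv t).const_mul (-2)).exp)
  have hderiv_nonpos : ∀ t ≥ t0,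
      (∑ i : Fin n, 2 * x t i * (β t * x t i / (1 + h (x t i)))) * Real.exp (-2 * B t)
        + S t * (Real.exp (-2 * B t) * (-2 * β t)) ≤ 0 := by
    intro t ht
    have hsum : (∑ i : Fin n, 2 * x t i * (β t * x t i / (1 + h (x t i))))
        ≤ 2 * β t * S t := by
      rw [hSdef, Finset.mul_sum]
      refine Finset.sum_le_sum fun i _ => ?_
      have heq : 2 * x t i * (β t * x t i / (1 + h (x t i)))
          = (2 * β t * (x t i) ^ 2) / (1 + h (x t i)) := by ring
      rw [heq]
      exact div_le_self (mul_nonneg (mul_nonneg (by norm_num) (hβnn t)) (sq_nonneg _)) (hden _)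
    have hE : 0 < Real.exp (-2 * B t) := Real.exp_pos _
    calc (∑ i : Fin n, 2 * x t i * (β t * x t i / (1 + h (x t i)))) * Real.exp (-2 * B t)
          + S t * (Real.exp (-2 * B t) * (-2 * β t))
        ≤ 2 * β t * S t * Real.exp (-2 * B t)
            + S t * (Real.exp (-2 * B t) * (-2 * β t)) := by
          have := mul_le_mul_of_nonneg_right hsum hE.le
          linarith
      _ = 0 := by ring
  have hanti : AntitoneOn u (Ici t0) := by
    have hc : ContinuousOn u (Ici t0) := fun t ht =>
      ((huderiv t ht).continuousAt).continuousWithinAt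
    refine antitoneOn_of_deriv_nonpos (convex_Ici t0) hc ?_ ?_
    · intro t ht
      rw [interior_Ici] at ht
      exact ((huderiv t (le_of_lt ht)).differentiableAt).differentiableWithinAt
    · intro t ht
      rw [interior_Ici] at ht
      rw [(huderiv t (le_of_lt ht)).deriv]
      exact hderiv_nonpos t (le_of_lt ht)
  have hS0 : S t0 = ‖x₀‖ ^ 2 := by
    rw [hSdef]
    simp only [hx0]
    rw [EuclideanSpace.norm_eq, Real.sq_sqrt (by positivity)]
    congr 1
    ext i
    rw [Real.norm_eq_abs, sq_abs]
  have hSbound : ∀ t ≥ t0, S t ≤ ‖x₀‖ ^ 2 * Real.exp (2 * M₁) := by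
    intro t ht
    have h1 : u t ≤ u t0 := hanti (self_mem_Ici) ht ht
    have h2 : u t0 = S t0 := by simp [hudef, hB0]
    have hE : 0 < Real.exp (-2 * B t) := Real.exp_pos _
    have h3 : S t ≤ S t0 * Real.exp (2 * B t) := by
      have := h1
      rw [h2] at this
      have h4 : S t * Real.exp (-2 * B t) ≤ S t0 := this
      have h5 : Real.exp (-2 * B t) * Real.exp (2 * B t) = 1 := by
        rw [← Real.exp_add]; ring_nf; exact Real.exp_zero
      nlinarith [Real.exp_pos (2 * B t)]
    calc S t ≤ S t0 * Real.exp (2 * B t) := h3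
      _ ≤ ‖x₀‖ ^ 2 * Real.exp (2 * M₁) := by
          rw [hS0]
          exact mul_le_mul_of_nonneg_left
            (Real.exp_le_exp.2 (by linarith [hBle t ht])) (by positivity)
  -- Now the integral estimate
  have hInt : Integrable (fun τ => β τ * (‖x₀‖ ^ 2 * Real.exp (2 * M₁)))
      (volume.restrict (Ici t0)) := hβint.mul_const _
  have hbound : ∀ᵐ τ ∂(volume.restrict (Ici t0)),
      max (∑ i : Fin n, β τ * (x τ i) ^ 2 / (1 + h (x τ i))) 0
        ≤ β τ * (‖x₀‖ ^ 2 * Real.exp (2 * M₁)) := by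
    filter_upwards [ae_restrict_mem measurableSet_Ici] with τ hτ
    have hW : (∑ i : Fin n, β τ * (x τ i) ^ 2 / (1 + h (x τ i)))
        ≤ β τ * (‖x₀‖ ^ 2 * Real.exp (2 * M₁)) := by
      have h1 : (∑ i : Fin n, β τ * (x τ i) ^ 2 / (1 + h (x τ i))) ≤ β τ * S τ := by
        rw [hSdef, Finset.mul_sum]
        refine Finset.sum_le_sum fun i _ => ?_
        exact div_le_self (mul_nonneg (hβnn τ) (sq_nonneg _)) (hden _)
      calc (∑ i : Fin n, β τ * (x τ i) ^ 2 / (1 + h (x τ i))) ≤ β τ * S τ := h1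
        _ ≤ β τ * (‖x₀‖ ^ 2 * Real.exp (2 * M₁)) :=
            mul_le_mul_of_nonneg_left (hSbound τ hτ) (hβnn τ)
    have hrhs : 0 ≤ β τ * (‖x₀‖ ^ 2 * Real.exp (2 * M₁)) := mul_nonneg (hβnn τ) (by positivity)
    exact max_le hW hrhs
  have hnn : 0 ≤ᵐ[volume.restrict (Ici t0)]
      fun τ => max (∑ i : Fin n, β τ * (x τ i) ^ 2 / (1 + h (x τ i))) 0 := by
    filter_upwards with τ using le_max_right _ _
  calc (∫ τ in Ici t0, max (∑ i : Fin n, β τ * (x τ i) ^ 2 / (1 + h (x τ i))) 0)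
      ≤ ∫ τ in Ici t0, β τ * (‖x₀‖ ^ 2 * Real.exp (2 * M₁)) :=
        integral_mono_of_nonneg hnn hInt hbound
    _ = (∫ τ in Ici t0, β τ) * (‖x₀‖ ^ 2 * Real.exp (2 * M₁)) := by
        rw [integral_mul_const]
    _ = M₁ * ‖x₀‖ ^ 2 * Real.exp (2 * M₁) := by rw [hM]; ring
end

section
/- Let v : [t₀, ∞) → ℝ be differentiable, nonnegative, with v'(t) ≤ −c·v(t) + w(t), c > 0, w ≥ 0 integrable on [t₀,∞). Then v(t) ≤ e^{−c(t−t₀)}v(t₀) + ∫_{t₀}^t e^{−c(t−s)} w(s) ds holds, and the second term tends to 0 as t → ∞; hence v(t) → 0 as t → ∞. -/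
open MeasureTheory Set Filter

theorem gronwall_variation_of_constants_tendsto_zero
    (v v' w : ℝ → ℝ) (t₀ c : ℝ)
    (hc : 0 < c)
    (hv : ∀ t ≥ t₀, HasDerivAt v (v' t) t)
    (hvnn : ∀ t ≥ t₀, 0 ≤ v t)
    (hvw : ∀ t ≥ t₀, v' t ≤ -c * v t + w t)
    (hwnn : ∀ t ≥ t₀, 0 ≤ w t)
    (hwint : IntegrableOn w (Ici t₀)) :
    (∀ t ≥ t₀, v t ≤ Real.exp (-c * (t - t₀)) * v t₀ +
        ∫ s in t₀..t, Real.exp (-c * (t - s)) * w s) ∧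
    Tendsto (fun t => ∫ s in t₀..t, Real.exp (-c * (t - s)) * w s) atTop (nhds 0) ∧
    Tendsto v atTop (nhds 0) := by
  -- interval integrability of w on subintervals of [t₀, ∞)
  have hwInt : ∀ a b : ℝ, t₀ ≤ a → t₀ ≤ b → IntervalIntegrable w volume a b := by
    intro a b ha hb
    rw [intervalIntegrable_iff]
    exact hwint.mono_set (fun x hx => le_trans (le_min ha hb) hx.1.le)
  -- interval integrability of the exponentially weighted integrand
  have hExpInt : ∀ t a b : ℝ, t₀ ≤ a → t₀ ≤ b →
      IntervalIntegrable (fun s => Real.exp (-c * (t - s)) * w s) volume a b := by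
    intro t a b ha hb
    exact (hwInt a b ha hb).continuousOn_mul (by fun_prop)
  -- generic exponential decay
  have hdec : ∀ m C : ℝ, Tendsto (fun t => Real.exp (-c * (t - m)) * C) atTop (nhds 0) := by
    intro m C
    have h1 : Tendsto (fun t : ℝ => c * (t - m)) atTop atTop :=
      (tendsto_atTop_add_const_right atTop (-m) tendsto_id).const_mul_atTop hc
    have h2 : Tendsto (fun t : ℝ => -c * (t - m)) atTop atBot := by
      have h := tendsto_neg_atTop_atBot.comp h1
      have he : (fun t : ℝ => -c * (t - m)) = (fun x => -x) ∘ (fun t => c * (t - m)) := by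
        ext t; simp [Function.comp]
      rwa [he]
    have h3 : Tendsto (fun t : ℝ => Real.exp (-c * (t - m))) atTop (nhds 0) :=
      Real.tendsto_exp_atBot.comp h2
    simpa using h3.mul_const C
  -- Part 1: the Grönwall bound
  have hbound : ∀ t ≥ t₀, v t ≤ Real.exp (-c * (t - t₀)) * v t₀ +
      ∫ s in t₀..t, Real.exp (-c * (t - s)) * w s := by
    intro t ht
    set g : ℝ → ℝ := fun x => Real.exp (c * x) * v x with hg_def
    have hg : ∀ x ≥ t₀, HasDerivAt g (Real.exp (c * x) * (c * v x + v' x)) x := by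
      intro x hx
      have h1 : HasDerivAt (fun y => Real.exp (c * y)) (c * Real.exp (c * x)) x := by
        simpa [mul_comm, Function.comp_def] using (Real.hasDerivAt_exp (c * x)).comp x
          ((hasDerivAt_id x).const_mul c)
      have : HasDerivAt (fun y => Real.exp (c * y) * v y)
          (c * Real.exp (c * x) * v x + Real.exp (c * x) * v' x) x := h1.mul (hv x hx)
      convert this using 1
      ring
    have key : g t - g t₀ ≤ ∫ s in t₀..t, Real.exp (c * s) * w s := by
      apply intervalIntegral.sub_le_integral_of_hasDeriv_right_of_le ht
      · exact fun x hx => (hg x hx.1).continuousAt.continuousWithinAt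
      · exact fun x hx => (hg x hx.1.le).hasDerivWithinAt
      · exact IntegrableOn.continuousOn_mul (by fun_prop)
          (hwint.mono_set (Icc_subset_Ici_self)) isCompact_Icc
      · intro x hx
        have h1 := hvw x hx.1.le
        have h2 := (Real.exp_pos (c * x)).le
        nlinarith [Real.exp_pos (c * x)]
    have e1 : v t = Real.exp (-c * t) * g t := by
      simp only [hg_def, ← mul_assoc, ← Real.exp_add]
      have : -c * t + c * t = 0 := by ring
      rw [this, Real.exp_zero, one_mul]
    have e2 : ∫ s in t₀..t, Real.exp (-c * (t - s)) * w s
        = Real.exp (-c * t) * ∫ s in t₀..t, Real.exp (c * s) * w s := by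
      rw [← intervalIntegral.integral_const_mul]
      apply intervalIntegral.integral_congr
      intro s _
      show Real.exp (-c * (t - s)) * w s = Real.exp (-c * t) * (Real.exp (c * s) * w s)
      rw [← mul_assoc, ← Real.exp_add]
      ring_nf
    have e3 : Real.exp (-c * (t - t₀)) = Real.exp (-c * t) * Real.exp (c * t₀) := by
      rw [← Real.exp_add]; ring_nf
    have hexp : (0 : ℝ) < Real.exp (-c * t) := Real.exp_pos _
    have h4 : g t ≤ g t₀ + ∫ s in t₀..t, Real.exp (c * s) * w s := by linarith
    have h5 := mul_le_mul_of_nonneg_left h4 hexp.le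
    rw [e1, e2, e3]
    calc Real.exp (-c * t) * g t
        ≤ Real.exp (-c * t) * (g t₀ + ∫ s in t₀..t, Real.exp (c * s) * w s) := h5
      _ = Real.exp (-c * t) * Real.exp (c * t₀) * v t₀
          + Real.exp (-c * t) * ∫ s in t₀..t, Real.exp (c * s) * w s := by
          simp only [hg_def]; ring
  -- Part 2: the convolution integral tends to 0
  have htend2 : Tendsto (fun t => ∫ s in t₀..t, Real.exp (-c * (t - s)) * w s)
      atTop (nhds 0) := by
    have hJ : Tendsto (fun m => ∫ s in t₀..m, w s) atTop (nhds (∫ s in Ioi t₀, w s)) :=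
      intervalIntegral_tendsto_integral_Ioi t₀ (hwint.mono_set Ioi_subset_Ici_self) tendsto_id
    rw [NormedAddCommGroup.tendsto_nhds_zero]
    intro ε hε
    obtain ⟨N, hN⟩ := Metric.tendsto_atTop.mp hJ (ε / 4) (by positivity)
    set m : ℝ := max N t₀ with hm_def
    have hmt₀ : t₀ ≤ m := le_max_right _ _
    have htail : ∀ b ≥ m, ∫ s in m..b, w s ≤ ε / 2 := by
      intro b hb
      have h1 := hN b (le_trans (le_max_left _ _) hb)
      have h2 := hN m (le_max_left _ _)
      have hsplit : (∫ s in t₀..m, w s) + ∫ s in m..b, w s = ∫ s in t₀..b, w s :=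
        intervalIntegral.integral_add_adjacent_intervals
          (hwInt t₀ m le_rfl hmt₀) (hwInt m b hmt₀ (le_trans hmt₀ hb))
      rw [Real.dist_eq] at h1 h2
      have h1' := abs_lt.mp h1
      have h2' := abs_lt.mp h2
      linarith
    set C : ℝ := ∫ s in t₀..m, w s with hC_def
    have hdec' : ∀ᶠ t in atTop, Real.exp (-c * (t - m)) * C < ε / 2 :=
      (hdec m C).eventually_lt_const (by positivity)
    filter_upwards [eventually_ge_atTop m, hdec'] with t htm hdt
    have htt₀ : t₀ ≤ t := le_trans hmt₀ htm
    have hsplit : (∫ s in t₀..m, Real.exp (-c * (t - s)) * w s)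
        + ∫ s in m..t, Real.exp (-c * (t - s)) * w s
        = ∫ s in t₀..t, Real.exp (-c * (t - s)) * w s :=
      intervalIntegral.integral_add_adjacent_intervals
        (hExpInt t t₀ m le_rfl hmt₀) (hExpInt t m t hmt₀ htt₀)
    have hb1 : ∫ s in t₀..m, Real.exp (-c * (t - s)) * w s
        ≤ Real.exp (-c * (t - m)) * C := by
      rw [hC_def, ← intervalIntegral.integral_const_mul]
      apply intervalIntegral.integral_mono_on hmt₀ (hExpInt t t₀ m le_rfl hmt₀)
        ((hwInt t₀ m le_rfl hmt₀).const_mul _)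
      intro s hs
      have hws := hwnn s hs.1
      have hexp : Real.exp (-c * (t - s)) ≤ Real.exp (-c * (t - m)) :=
        Real.exp_le_exp.2 (by nlinarith [hs.2])
      exact mul_le_mul_of_nonneg_right hexp hws
    have hb2 : ∫ s in m..t, Real.exp (-c * (t - s)) * w s ≤ ∫ s in m..t, w s := by
      apply intervalIntegral.integral_mono_on htm (hExpInt t m t hmt₀ htt₀)
        (hwInt m t hmt₀ htt₀)
      intro s hs
      have hws := hwnn s (le_trans hmt₀ hs.1)
      have hexp : Real.exp (-c * (t - s)) ≤ 1 :=
        Real.exp_le_one_iff.2 (by nlinarith [hs.2])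
      nlinarith
    have hnn1 : 0 ≤ ∫ s in t₀..m, Real.exp (-c * (t - s)) * w s := by
      apply intervalIntegral.integral_nonneg hmt₀
      intro s hs
      exact mul_nonneg (Real.exp_pos _).le (hwnn s hs.1)
    have hnn2 : 0 ≤ ∫ s in m..t, Real.exp (-c * (t - s)) * w s := by
      apply intervalIntegral.integral_nonneg htm
      intro s hs
      exact mul_nonneg (Real.exp_pos _).le (hwnn s (le_trans hmt₀ hs.1))
    rw [Real.norm_eq_abs, abs_of_nonneg (by linarith)]
    have := htail t htm
    linarith
  refine ⟨hbound, htend2, ?_⟩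
  -- Part 3: squeeze
  apply squeeze_zero' (f := v)
    (g := fun t => Real.exp (-c * (t - t₀)) * v t₀ +
      ∫ s in t₀..t, Real.exp (-c * (t - s)) * w s)
  · filter_upwards [eventually_ge_atTop t₀] with t ht using hvnn t ht
  · filter_upwards [eventually_ge_atTop t₀] with t ht using hbound t ht
  · simpa using (hdec t₀ (v t₀)).add htend2
end

section
/- Let V : [0,∞) × ℝⁿ → ℝ be C¹ with V₁(x) ≤ V(t,x) ≤ V₂(x) for continuous positive definite V₁, V₂, and suppose along every solution x(t) of ẋ = f(t,x) starting in a ball B_c we have d/dt V(t,x(t)) ≤ −V₃(x(t)) + g(t) with V₃ continuous positive definite and g ≥ 0, ∫_{t₀}^∞ g ≤ M(x₀) where M is continuous, bounded, and M(x₀) → 0 as x₀ → 0. Then for every ε > 0 there is δ > 0 (independent of t₀) such that ‖x₀‖ < δ implies ‖x(t)‖ < ε for all t ≥ t₀, i.e., the origin is uniformly stable. -/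
open MeasureTheory Set Filter

theorem uniform_stability_theorem2
    (n : ℕ) (V : ℝ → EuclideanSpace ℝ (Fin n) → ℝ)
    (V₁ V₂ V₃ : EuclideanSpace ℝ (Fin n) → ℝ)
    (M : EuclideanSpace ℝ (Fin n) → ℝ)
    (f : ℝ → EuclideanSpace ℝ (Fin n) → EuclideanSpace ℝ (Fin n))
    (c : ℝ) (hc : 0 < c)
    (hVC1 : ContDiff ℝ 1 (fun p : ℝ × EuclideanSpace ℝ (Fin n) => V p.1 p.2))
    (hV₁c : Continuous V₁) (hV₂c : Continuous V₂) (hV₃c : Continuous V₃)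
    (hV₁pd : V₁ 0 = 0 ∧ ∀ y ≠ 0, 0 < V₁ y)
    (hV₂pd : V₂ 0 = 0 ∧ ∀ y ≠ 0, 0 < V₂ y)
    (hV₃pd : V₃ 0 = 0 ∧ ∀ y ≠ 0, 0 < V₃ y)
    (hsand : ∀ t y, V₁ y ≤ V t y ∧ V t y ≤ V₂ y)
    (hMc : Continuous M) (hMbd : ∃ B, ∀ y, M y ≤ B)
    (hM0 : Tendsto M (nhds 0) (nhds 0))
    (hdecay : ∀ t₀ ≥ (0 : ℝ), ∀ x : ℝ → EuclideanSpace ℝ (Fin n),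
      (∀ t ≥ t₀, HasDerivAt x (f t (x t)) t) → ‖x t₀‖ < c →
      ∃ g : ℝ → ℝ, (∀ t, 0 ≤ g t) ∧ IntegrableOn g (Ici t₀) ∧
        (∫ τ in Ici t₀, g τ) ≤ M (x t₀) ∧
        ∀ t ≥ t₀, ∃ d, HasDerivAt (fun s => V s (x s)) d t ∧ d ≤ -V₃ (x t) + g t) :
    ∀ ε > (0 : ℝ), ∃ δ > (0 : ℝ),
      ∀ t₀ ≥ (0 : ℝ), ∀ x : ℝ → EuclideanSpace ℝ (Fin n),
        (∀ t ≥ t₀, HasDerivAt x (f t (x t)) t) →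
        ‖x t₀‖ < δ → ∀ t ≥ t₀, ‖x t‖ < ε := by

  intro ε hε
  rcases Nat.eq_zero_or_pos n with hn | hn
  · refine ⟨1, one_pos, fun t₀ _ x _ _ t _ => ?_⟩
    subst hn
    rw [Subsingleton.elim (x t) 0, norm_zero]
    exact hε
  -- nontrivial case
  haveI : Nonempty (Fin n) := ⟨⟨0, hn⟩⟩
  set ε₀ : ℝ := min ε c with hε₀def
  have hε₀ : 0 < ε₀ := lt_min hε hc
  have hε₀ε : ε₀ ≤ ε := min_le_left _ _
  have hε₀c : ε₀ ≤ c := min_le_right _ _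
  -- minimum of V₁ on the sphere of radius ε₀
  obtain ⟨y₀, hy₀s, hy₀min⟩ := (isCompact_sphere (0 : EuclideanSpace ℝ (Fin n)) ε₀).exists_isMinOn
    (NormedSpace.sphere_nonempty.mpr hε₀.le) hV₁c.continuousOn
  set m : ℝ := V₁ y₀ with hmdef
  have hy₀norm : ‖y₀‖ = ε₀ := by simpa using mem_sphere_zero_iff_norm.mp hy₀s
  have hm : 0 < m := hV₁pd.2 y₀ (by intro h; rw [h, norm_zero] at hy₀norm; exact hε₀.ne hy₀norm)
  -- choose δ using continuity of V₂ + M at 0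
  have htend : Tendsto (fun y : EuclideanSpace ℝ (Fin n) => V₂ y + M y) (nhds 0) (nhds 0) := by
    have := (hV₂c.tendsto 0).add hM0
    rwa [hV₂pd.1, zero_add] at this
  have hev : ∀ᶠ y : EuclideanSpace ℝ (Fin n) in nhds 0, V₂ y + M y < m := htend.eventually (Filter.Tendsto.eventually_lt_const hm tendsto_id)
  obtain ⟨δ₁, hδ₁, hδ₁h⟩ := Metric.eventually_nhds_iff.mp hev
  refine ⟨min δ₁ ε₀, lt_min hδ₁ hε₀, ?_⟩
  intro t₀ ht₀ x hx hx₀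
  have hx₀ε₀ : ‖x t₀‖ < ε₀ := lt_of_lt_of_le hx₀ (min_le_right _ _)
  have hx₀m : V₂ (x t₀) + M (x t₀) < m := by
    apply hδ₁h
    rw [dist_zero_right]
    exact lt_of_lt_of_le hx₀ (min_le_left _ _)
  obtain ⟨g, hg0, hgint, hgM, hd⟩ := hdecay t₀ ht₀ x hx (lt_of_lt_of_le hx₀ε₀ hε₀c)
  -- main claim
  have key : ∀ t ≥ t₀, ‖x t‖ < ε₀ := by
    by_contra hcon
    push_neg at hcon
    obtain ⟨t₁, ht₁, ht₁n⟩ := hcon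
    set S : Set ℝ := Ici t₀ ∩ (fun s => ‖x s‖) ⁻¹' Ici ε₀ with hSdef
    have hxc : ∀ s ∈ Ici t₀, ContinuousAt (fun u => ‖x u‖) s :=
      fun s hs => (hx s hs).continuousAt.norm
    have hSclosed : IsClosed S :=
      ContinuousOn.preimage_isClosed_of_isClosed
        (fun s hs => (hxc s hs).continuousWithinAt) isClosed_Ici isClosed_Ici
    have hSne : S.Nonempty := ⟨t₁, ht₁, ht₁n⟩
    have hSbdd : BddBelow S := ⟨t₀, fun s hs => hs.1⟩
    set T : ℝ := sInf S with hTdef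
    have hTS : T ∈ S := hSclosed.csInf_mem hSne hSbdd
    have hTt₀ : t₀ < T := by
      rcases lt_or_eq_of_le (mem_Ici.mp hTS.1) with h | h
      · exact h
      · exfalso; have := hTS.2; rw [← h] at this; exact absurd this (not_le.mpr hx₀ε₀)
    have hlt : ∀ s, t₀ ≤ s → s < T → ‖x s‖ < ε₀ := by
      intro s hs hsT
      by_contra h
      push_neg at h
      exact absurd (csInf_le hSbdd ⟨hs, h⟩) (not_le.mpr hsT)
    have hxT : ‖x T‖ ≤ ε₀ := by
      have htnd : Tendsto (fun u => ‖x u‖) (nhdsWithin T (Iio T)) (nhds ‖x T‖) :=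
        ((hxc T hTS.1).continuousWithinAt).tendsto
      refine le_of_tendsto htnd ?_
      filter_upwards [Ioo_mem_nhdsLT_of_mem (⟨hTt₀, le_refl T⟩ : T ∈ Ioc t₀ T)] with s hs
      exact (hlt s hs.1.le hs.2).le
    have hxTe : ‖x T‖ = ε₀ := le_antisymm hxT hTS.2
    -- V₁ (x T) ≥ m
    have hV₁T : m ≤ V₁ (x T) := hy₀min (mem_sphere_zero_iff_norm.mpr hxTe)
    -- FTC inequality
    have hVcont : ContinuousOn (fun s => V s (x s)) (Icc t₀ T) := by
      intro s hs
      have h1 : ContinuousAt (fun u : ℝ => ((u, x u) : ℝ × EuclideanSpace ℝ (Fin n))) s :=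
        continuousAt_id.prodMk (hx s hs.1).continuousAt
      have h2 : ContinuousAt (fun u => V u (x u)) s := hVC1.continuous.continuousAt.comp h1
      exact h2.continuousWithinAt
    set D : ℝ → ℝ := fun s => if hs : t₀ ≤ s then (hd s hs).choose else 0 with hDdef
    have hDderiv : ∀ s ∈ Ioo t₀ T, HasDerivWithinAt (fun u => V u (x u)) (D s) (Ioi s) s := by
      intro s hs
      have h := (hd s hs.1.le).choose_spec.1
      simp only [hDdef, dif_pos hs.1.le]
      exact h.hasDerivWithinAt
    have hDle : ∀ s ∈ Ioo t₀ T, D s ≤ g s := by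
      intro s hs
      have h := (hd s hs.1.le).choose_spec.2
      simp only [hDdef, dif_pos hs.1.le]
      refine h.trans ?_
      have : 0 ≤ V₃ (x s) := by
        rcases eq_or_ne (x s) 0 with h0 | h0
        · rw [h0, hV₃pd.1]
        · exact (hV₃pd.2 _ h0).le
      linarith
    have hgIcc : IntegrableOn g (Icc t₀ T) := hgint.mono_set (Icc_subset_Ici_self)
    have hFTC : V T (x T) - V t₀ (x t₀) ≤ ∫ s in t₀..T, g s :=
      intervalIntegral.sub_le_integral_of_hasDeriv_right_of_le hTt₀.le hVcont hDderiv hgIcc hDle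
    have hIle : (∫ s in t₀..T, g s) ≤ ∫ τ in Ici t₀, g τ := by
      rw [intervalIntegral.integral_of_le hTt₀.le]
      apply setIntegral_mono_set hgint
      · filter_upwards with s using hg0 s
      · filter_upwards with s hs using hs.1.le
    have h1 : V₁ (x T) ≤ V T (x T) := (hsand T (x T)).1
    have h2 : V t₀ (x t₀) ≤ V₂ (x t₀) := (hsand t₀ (x t₀)).2
    linarith
  intro t ht
  exact lt_of_lt_of_le (key t ht) hε₀ε
end
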